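/- Suppose Σ_{i=0}^∞ a_i 3^i = Σ_{i=0}^∞ b_i 3^i as 3-adic integers, with a_i ∈ {0, ±1} and b_i ∈ {0,1,2}. Then for every t: b_t ≡ a_t + Σ_{0 ≤ λ < t} a_λ(a_λ - 1) · Π_{λ < i < t} (1 - a_i²) (mod 3). -/

import Mathlib

/-!
Equality in `ℤ₃` means that `3 ^ N` divides `∑_{i<N} (a_i - b_i) 3^i` for every `N`; the
quotient `c_N` is the carry after `N` digits, with `c_0 = 0` and `3 c_{t+1} = c_t + a_t - b_t`.
Inductively `c_t ∈ {0, -1}`, hence `b_t ≡ a_t + c_t (mod 3)`, and modulo 3 the carry satisfies the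
linear recurrence `c_{t+1} = a_t (a_t - 1) + (1 - a_t²) c_t`, whose solution is the stated sum.
-/

open Finset

namespace PadicInt

variable {p : ℕ} [Fact p.Prime]

theorem summable_mul_pow (f : ℕ → ℤ_[p]) : Summable fun i => f i * (p : ℤ_[p]) ^ i := by
  have hp : (1 : ℝ) < p := mod_cast (Fact.out : p.Prime).one_lt
  refine Summable.of_norm_bounded
    (summable_geometric_of_lt_one (by positivity) (inv_lt_one_of_one_lt₀ hp)) fun i => ?_
  rw [norm_mul, norm_pow, norm_p]
  exact mul_le_of_le_one_left (by positivity) (norm_le_one _)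

theorem pow_dvd_sum_range_sub_of_tsum_eq {f g : ℕ → ℤ_[p]}
    (h : ∑' i, f i * (p : ℤ_[p]) ^ i = ∑' i, g i * (p : ℤ_[p]) ^ i) (N : ℕ) :
    (p : ℤ_[p]) ^ N ∣ ∑ i ∈ range N, (f i - g i) * (p : ℤ_[p]) ^ i := by
  have hsum : ∑' i, (f i - g i) * (p : ℤ_[p]) ^ i = 0 := by
    simp only [sub_mul]
    rw [(summable_mul_pow f).tsum_sub (summable_mul_pow g), h, sub_self]
  have htail : ∑' i, (f (i + N) - g (i + N)) * (p : ℤ_[p]) ^ (i + N)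
      = (p : ℤ_[p]) ^ N * ∑' i, (f (i + N) - g (i + N)) * (p : ℤ_[p]) ^ i := by
    rw [← (summable_mul_pow _).tsum_mul_left]
    exact tsum_congr fun i => by ring
  have hsplit := (summable_mul_pow fun i => f i - g i).sum_add_tsum_nat_add N
  rw [hsum, htail] at hsplit
  rw [eq_neg_of_add_eq_zero_left hsplit]
  exact (dvd_mul_right _ _).neg_right

end PadicInt

theorem eq_sum_mul_prod_Ioo_of_succ_eq {R : Type*} [CommSemiring R] {x u v : ℕ → R}
    (h0 : x 0 = 0) (hsucc : ∀ t, x (t + 1) = u t + v t * x t) (t : ℕ) :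
    x t = ∑ l ∈ range t, u l * ∏ i ∈ Ioo l t, v i := by
  induction t with
  | zero => simp [h0]
  | succ n ih =>
    rw [hsucc, ih, sum_range_succ, Ioo_add_one_right_eq_Ioc n n, Ioc_self, prod_empty, mul_one,
      mul_sum, add_comm]
    refine congrArg (· + u n) (sum_congr rfl fun l hl => ?_)
    rw [Ioo_add_one_right_eq_Ioc, ← Ioo_insert_right (mem_range.mp hl), prod_insert (by simp)]
    ring

theorem exists_carry_of_pow_dvd {p : ℤ} (hp : p ≠ 0) {d : ℕ → ℤ}
    (h : ∀ N, p ^ N ∣ ∑ i ∈ range N, d i * p ^ i) :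
    ∃ c : ℕ → ℤ, c 0 = 0 ∧ ∀ t, p * c (t + 1) = c t + d t := by
  choose c hc using h
  refine ⟨c, by simpa using (hc 0).symm, fun t => ?_⟩
  have := hc (t + 1)
  rw [sum_range_succ, hc t, pow_succ] at this
  apply mul_left_cancel₀ (pow_ne_zero t hp)
  linear_combination -this

theorem ternary_carry_step {a b c c' : ℤ} (ha : |a| ≤ 1) (hb₀ : 0 ≤ b) (hb₃ : b < 3)
    (hc : c = 0 ∨ c = -1) (h : 3 * c' = c + (a - b)) :
    (b : ZMod 3) = a + c ∧ (c' = 0 ∨ c' = -1) ∧ (c' : ZMod 3) = a * (a - 1) + (1 - a ^ 2) * c := by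
  have ha' : a = -1 ∨ a = 0 ∨ a = 1 := by have := abs_le.mp ha; omega
  have hc' : c' = 0 ∨ c' = -1 := by have := abs_le.mp ha; omega
  refine ⟨?_, hc', ?_⟩
  · have hb : b = a + c - 3 * c' := by omega
    simp [hb, show (3 : ZMod 3) = 0 from rfl]
  · -- The new carry is `-1` exactly when `c + a < 0`; the polynomial interpolates this mod 3.
    rcases ha' with rfl | rfl | rfl <;> rcases hc with rfl | rfl <;> rcases hc' with rfl | rfl <;>
      first | omega | decide

/-- Balanced to standard ternary digit transformation. -/
theorem balanced_to_standard_ternary (a : ℕ → ℤ) (b : ℕ → ℕ)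
    (ha : ∀ i, |a i| ≤ 1) (hb : ∀ i, b i < 3)
    (heq : (∑' i : ℕ, (a i : ℤ_[3]) * 3 ^ i) = ∑' i : ℕ, (b i : ℤ_[3]) * 3 ^ i) :
    ∀ t, (b t : ZMod 3) = (a t : ZMod 3) +
      ∑ l ∈ Finset.range t,
        (a l : ZMod 3) * ((a l : ZMod 3) - 1) *
          ∏ i ∈ Finset.Ioo l t, (1 - (a i : ZMod 3) ^ 2) := by
  have hdvd (N : ℕ) : (3 : ℤ) ^ N ∣ ∑ i ∈ range N, (a i - b i) * 3 ^ i := by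
    have := PadicInt.pow_dvd_sum_range_sub_of_tsum_eq (p := 3) (f := fun i => (a i : ℤ_[3]))
      (g := fun i => (b i : ℤ_[3])) (by simpa using heq) N
    exact_mod_cast (PadicInt.pow_p_dvd_int_iff (p := 3) N _).mp (by push_cast; simpa using this)
  obtain ⟨c, hc0, hc⟩ := exists_carry_of_pow_dvd (by norm_num) hdvd
  have step (t : ℕ) (hct : c t = 0 ∨ c t = -1) :=
    ternary_carry_step (ha t) (Int.natCast_nonneg _) (by exact_mod_cast hb t) hct (hc t)
  have hcarry (t : ℕ) : c t = 0 ∨ c t = -1 := by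
    induction t with
    | zero => exact .inl hc0
    | succ t ih => exact (step t ih).2.1
  intro t
  rw [← Int.cast_natCast, (step t (hcarry t)).1,
    eq_sum_mul_prod_Ioo_of_succ_eq (x := fun t => (c t : ZMod 3)) (by simp [hc0])
      (fun t => (step t (hcarry t)).2.2) t]
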